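/- arXiv:2410.05888 — 3 statements merged into one kernel-verified Lean document; each statement's English description precedes it below -/
import Mathlib

section
/- Let R be a commutative ring. For every Kronecker representation (M_t, M_h; μ_a, μ_b) over R, the sequence 0 → (M_t', 0; 0, 0) → (M_t, M_h; μ_a, μ_b) → (M_t/M_t', M_h; μ̄_a, μ̄_b) → 0, where M_t' = ker(μ_a) ∩ ker(μ_b), is split for every such representation if and only if R is semisimple. -/
universe u

/-!
The sequence splits exactly when `K = ker μ_a ⊓ ker μ_b` is a direct summand of `M_t`.
Over a semisimple ring every submodule is a direct summand. Conversely, any ideal `I` is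
the joint kernel of the representation `(R, R ⧸ I; π, π)`, so splitting for all
representations makes every ideal a direct summand of `R`, i.e. `R` is semisimple.
-/

section Retraction

variable {R M : Type*} [Ring R] [AddCommGroup M] [Module R M]

theorem Submodule.exists_retraction_of_isSemisimpleModule [IsSemisimpleModule R M]
    (p : Submodule R M) : ∃ ρ : M →ₗ[R] p, ∀ y : p, ρ y = y := by
  obtain ⟨ρ, hρ⟩ := IsSemisimpleModule.extension_property p.subtype p.injective_subtype
    LinearMap.id
  exact ⟨ρ, fun y => LinearMap.congr_fun hρ y⟩

theorem IsSemisimpleModule.of_forall_exists_retraction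
    (h : ∀ p : Submodule R M, ∃ ρ : M →ₗ[R] p, ∀ y : p, ρ y = y) :
    IsSemisimpleModule R M where
  exists_isCompl p :=
    let ⟨ρ, hρ⟩ := h p
    ⟨LinearMap.ker ρ, LinearMap.isCompl_of_proj hρ⟩

end Retraction

/-- for every Kronecker representation over `R`, the canonical sequence
`0 → (K, 0; 0, 0) → (M_t, M_h; μ_a, μ_b) → (M_t/K, M_h; μ̄_a, μ̄_b) → 0` with
`K = ker μ_a ⊓ ker μ_b` splits (i.e. the inclusion `(ι_t, 0)` has a retraction, which
amounts to a linear retraction of `K ↪ M_t`) if and only if `R` is semisimple. -/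
theorem stmt11 (R : Type u) [CommRing R] :
    (∀ (Mt Mh : Type u) [AddCommGroup Mt] [Module R Mt] [AddCommGroup Mh] [Module R Mh]
      (μa μb : Mt →ₗ[R] Mh),
        ∃ ρ : Mt →ₗ[R] ↥(LinearMap.ker μa ⊓ LinearMap.ker μb),
          ∀ y : ↥(LinearMap.ker μa ⊓ LinearMap.ker μb), ρ (y : Mt) = y) ↔
    IsSemisimpleRing R := by
  refine ⟨fun hsplit => ?_, fun _ Mt Mh _ _ _ _ μa μb =>
    (LinearMap.ker μa ⊓ LinearMap.ker μb).exists_retraction_of_isSemisimpleModule⟩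
  refine IsSemisimpleModule.of_forall_exists_retraction fun I => ?_
  have hI := hsplit R (R ⧸ I) I.mkQ I.mkQ
  rwa [inf_idem, Submodule.ker_mkQ] at hI
end

section
/- Let R be an artinian local commutative ring with maximal ideal J ≠ 0 (so R is not a field), e.g. the DVR quotient situation with Jⁿ = 0 for minimal n > 1. With M = R ⊕ R/J and D the relation of the previous example, D^♯ ≅ R ⊕ R/J is not isomorphic as an R-module to D^♭ ⊕ (D^♯/D^♭) ≅ J ⊕ R/J ⊕ R/J, because the latter is annihilated by J^{n−1} and the former is not. -/
/-- for an artinian local commutative ring `R` with maximal ideal `J ≠ 0`,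
the module `D^♯ ≅ R ⊕ R/J` is not isomorphic to
`D^♭ ⊕ (D^♯/D^♭) ≅ J ⊕ R/J ⊕ R/J`. -/
theorem stmt15 {R : Type*} [CommRing R] [IsArtinianRing R] [IsLocalRing R]
    (hJ : IsLocalRing.maximalIdeal R ≠ ⊥) :
    IsEmpty ((R × (R ⧸ (IsLocalRing.maximalIdeal R : Submodule R R))) ≃ₗ[R]
      (↥(IsLocalRing.maximalIdeal R) ×
        ((R ⧸ (IsLocalRing.maximalIdeal R : Submodule R R)) ×
          (R ⧸ (IsLocalRing.maximalIdeal R : Submodule R R))))) := by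
  classical
  constructor
  intro e
  set J : Ideal R := IsLocalRing.maximalIdeal R with hJdef
  have hnil : IsNilpotent J := by
    have h := IsArtinianRing.isNilpotent_jacobson_bot (R := R)
    rwa [IsLocalRing.jacobson_eq_maximalIdeal ⊥ bot_ne_top] at h
  have hex : ∃ k, J ^ k = ⊥ := hnil
  set m := Nat.find hex with hmdef
  have hm : J ^ m = ⊥ := Nat.find_spec hex
  have hm2 : 2 ≤ m := by
    by_contra h
    interval_cases m
    · rw [pow_zero, Ideal.one_eq_top] at hm
      exact hJ (eq_bot_iff.mpr (hm ▸ le_top))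
    · rw [pow_one] at hm; exact hJ hm
  have hprev : J ^ (m - 1) ≠ ⊥ := Nat.find_min hex (by omega)
  obtain ⟨a, haP, ha0⟩ := (Submodule.ne_bot_iff _).mp hprev
  have haJ : a ∈ J := Ideal.pow_le_self (by omega : m - 1 ≠ 0) haP
  have key : ∀ z : (↥J × ((R ⧸ (J : Submodule R R)) × (R ⧸ (J : Submodule R R)))),
      a • z = 0 := by
    rintro ⟨j, q1, q2⟩
    obtain ⟨r1, rfl⟩ := Submodule.Quotient.mk_surjective _ q1
    obtain ⟨r2, rfl⟩ := Submodule.Quotient.mk_surjective _ q2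
    refine Prod.ext ?_ (Prod.ext ?_ ?_)
    · ext
      show a * (j : R) = 0
      have hmem : a * (j : R) ∈ J ^ m := by
        rw [show m = (m - 1) + 1 by omega, pow_succ]
        exact Ideal.mul_mem_mul haP j.2
      simpa [hm] using hmem
    · show a • Submodule.Quotient.mk r1 = 0
      rw [← Submodule.Quotient.mk_smul, Submodule.Quotient.mk_eq_zero]
      simpa [smul_eq_mul] using Ideal.mul_mem_right r1 J haJ
    · show a • Submodule.Quotient.mk r2 = 0
      rw [← Submodule.Quotient.mk_smul, Submodule.Quotient.mk_eq_zero]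
      simpa [smul_eq_mul] using Ideal.mul_mem_right r2 J haJ
  have h1 : a • e ((1 : R), (0 : R ⧸ (J : Submodule R R))) = 0 := key _
  have h2 : a • ((1 : R), (0 : R ⧸ (J : Submodule R R))) = 0 := by
    have h3 := congrArg e.symm h1
    rwa [map_smul, e.symm_apply_apply, map_zero] at h3
  have : a = 0 := by
    have := congrArg Prod.fst h2
    simpa using this
  exact ha0 this
end

section
/- Let R be a commutative ring and (M[i], μ_i) a ray-representation in which only finitely many indices i have direction − (i.e., μ_i : M[i] → M[i−1]); let k be the maximum such index (or 0 if none). Then ∩_{i∈ℕ} μ̃_{≤i} M[i] = μ̃_{≤k} M[k]. Dually, if only finitely many indices have direction +, with maximum k, then ∪_{i∈ℕ} μ̃_{≤i} 0 = μ̃_{≤k} 0. -/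
variable {R : Type*} [CommRing R]

/-- `rayImage rel n S = μ̃_{≤n} S`: the subset of `M 0` of elements connected to an
element of `S ⊆ M n` by a chain through the relations `μ̃_1, …, μ̃_n`, where
`rel i ⊆ M i ⊕ M (i+1)` is the relation `μ̃_{i+1}` (so `(m_i, m_{i+1}) ∈ rel i` means
`m_i ∈ μ̃_{i+1} m_{i+1}`). For `n = 0` this is `S` itself, i.e. `μ̃_{≤0} = graph(id)`. -/
def rayImage {M : ℕ → Type*} [∀ i, AddCommGroup (M i)] [∀ i, Module R (M i)]
    (rel : ∀ i : ℕ, Submodule R (M i × M (i + 1))) (n : ℕ) (S : Set (M n)) : Set (M 0) :=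
  {m | ∃ c : ∀ i, M i, c 0 = m ∧ (∀ i, i < n → (c i, c (i + 1)) ∈ rel i) ∧ c n ∈ S}

/-- Extend a chain starting from `c0` using the step functions `step`. -/
def extendChain {M : ℕ → Type*} (c0 : M 0) (step : ∀ j, M j → M (j + 1)) : ∀ i, M i
  | 0 => c0
  | (i + 1) => step i (extendChain c0 step i)

/-- if from step `k` onwards all maps of the ray-representation point
forwards (`+`), then `∩ᵢ μ̃_{≤i} M[i] = μ̃_{≤k} M[k]`; dually, if from step `k` onwards
all maps point backwards (`−`), then `∪ᵢ μ̃_{≤i} 0 = μ̃_{≤k} 0`. -/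
theorem stmt17 {M : ℕ → Type*} [∀ i, AddCommGroup (M i)] [∀ i, Module R (M i)]
    (rel : ∀ i : ℕ, Submodule R (M i × M (i + 1)))
    (dir : ℕ → Bool)
    (hminus : ∀ i, dir i = false →
      ∃ f : M (i + 1) →ₗ[R] M i, ∀ p : M i × M (i + 1), p ∈ rel i ↔ p.1 = f p.2)
    (hplus : ∀ i, dir i = true →
      ∃ g : M i →ₗ[R] M (i + 1), ∀ p : M i × M (i + 1), p ∈ rel i ↔ p.2 = g p.1)
    (k : ℕ) :
    ((∀ i, k ≤ i → dir i = true) →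
      (⋂ i : ℕ, rayImage rel i Set.univ) = rayImage rel k Set.univ) ∧
    ((∀ i, k ≤ i → dir i = false) →
      (⋃ i : ℕ, rayImage rel i {0}) = rayImage rel k {0}) := by
  constructor
  · intro hall
    apply subset_antisymm
    · exact Set.iInter_subset _ k
    · intro m hm
      obtain ⟨c, hc0, hcrel, -⟩ := hm
      have hg : ∀ i, k ≤ i → ∃ g : M i →ₗ[R] M (i + 1),
          ∀ p : M i × M (i + 1), p ∈ rel i ↔ p.2 = g p.1 :=
        fun i hi => hplus i (hall i hi)
      choose g hgspec using hg
      set c' : ∀ i, M i :=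
        extendChain (c 0) (fun j x => if h : k ≤ j then g j h x else c (j + 1)) with hc'
      have hstep : ∀ j, c' (j + 1) = if h : k ≤ j then g j h (c' j) else c (j + 1) := by
        intro j; rfl
      have hc'le : ∀ i, i ≤ k → c' i = c i := by
        intro i hi
        cases i with
        | zero => rfl
        | succ j =>
          rw [hstep j, dif_neg (by omega)]
      have hc'rel : ∀ i, (c' i, c' (i + 1)) ∈ rel i := by
        intro i
        by_cases h : k ≤ i
        · have : c' (i + 1) = g i h (c' i) := by rw [hstep i, dif_pos h]
          exact (hgspec i h (c' i, c' (i + 1))).2 this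
        · have h1 : c' i = c i := hc'le i (by omega)
          have h2 : c' (i + 1) = c (i + 1) := hc'le (i + 1) (by omega)
          rw [h1, h2]
          exact hcrel i (by omega)
      apply Set.mem_iInter.2
      intro n
      exact ⟨c', by rw [hc'le 0 (by omega), hc0], fun i _ => hc'rel i, trivial⟩
  · intro hall
    apply subset_antisymm
    · apply Set.iUnion_subset
      intro n m hm
      obtain ⟨c, hc0, hcrel, hcn⟩ := hm
      have hcn' : c n = 0 := hcn
      rcases le_total n k with hnk | hkn
      · -- n ≤ k : extend the chain by zeros
        set c'' : ∀ i, M i := fun i => if h : i ≤ n then c i else 0 with hc''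
        have e1 : ∀ i (h : i ≤ n), c'' i = c i := fun i h => dif_pos h
        have e2 : ∀ i (h : ¬ i ≤ n), c'' i = (0 : M i) := fun i h => dif_neg h
        refine ⟨c'', by rw [e1 0 (by omega)]; exact hc0, ?_, ?_⟩
        · intro i hik
          by_cases h1 : i + 1 ≤ n
          · rw [e1 i (by omega), e1 (i + 1) h1]
            exact hcrel i (by omega)
          · by_cases h2 : i ≤ n
            · have hin : i = n := by omega
              subst hin
              rw [e1 i h2, e2 (i + 1) h1, hcn']
              exact (rel i).zero_mem
            · rw [e2 i h2, e2 (i + 1) h1]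
              exact (rel i).zero_mem
        · by_cases h : k ≤ n
          · have hnk' : n = k := by omega
            subst hnk'
            rw [e1 n le_rfl]
            exact hcn
          · rw [e2 k h]; rfl
      · -- k ≤ n : the tail of the chain is zero
        have key : ∀ d i, i + d = n → k ≤ i → c i = 0 := by
          intro d
          induction d with
          | zero =>
            intro i h _
            have : i = n := by omega
            subst this
            exact hcn'
          | succ d ih =>
            intro i h hk
            have hnext : c (i + 1) = 0 := ih (i + 1) (by omega) (by omega)
            obtain ⟨f, hf⟩ := hminus i (hall i hk)
            by_cases hin : i < n
            · have := (hf (c i, c (i + 1))).1 (hcrel i hin)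
              simp only at this
              rw [this, hnext, map_zero]
            · omega
        refine ⟨c, hc0, fun i hi => hcrel i (by omega), ?_⟩
        show c k ∈ ({0} : Set (M k))
        rw [key (n - k) k (by omega) le_rfl]
        rfl
    · exact Set.subset_iUnion (fun i => rayImage rel i {0}) k
end
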